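/- Let T, A, κ be real numbers with T > 2, κ ≥ 0, and A ≥ 3κ·(T + 2)/(T − 2), and let n ≥ 1 be a natural number. Then ((nT + 1)·A)/(A + 3nκT) ≥ (nT·A)/(T·A + 3(n−1)κT). -/
import Mathlib


/-- Worst-case: ζ₁ ≥ ζ₂ when A ≥ 3κ(T+2)/(T-2) and T > 2. -/
theorem worst_case_zeta1_ge_zeta2 (T A κ : ℝ) (n : ℕ)
    (hT : 2 < T) (hκ : 0 ≤ κ) (hA : A ≥ 3 * κ * (T + 2) / (T - 2)) (hn : 1 ≤ n) :
    ((n * T + 1) * A) / (A + 3 * n * κ * T) ≥ (n * T * A) / (T * A + 3 * ((n : ℝ) - 1) * κ * T) := by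
  have hT2 : (0:ℝ) < T - 2 := by linarith
  have hn' : (1:ℝ) ≤ (n:ℝ) := by exact_mod_cast hn
  have h3 : 3 * κ ≤ A := by
    have h : 3 * κ ≤ 3 * κ * (T + 2) / (T - 2) := by
      rw [le_div_iff₀ hT2]; nlinarith
    linarith
  have hA0 : 0 ≤ A := by nlinarith
  rcases hA0.eq_or_lt with h0 | hpos
  · simp [← h0]
  · have hT0 : (0:ℝ) < T := by linarith
    have e1 : 0 ≤ 3 * (n:ℝ) * κ * T := by positivity
    have e2 : 0 ≤ 3 * ((n:ℝ) - 1) * κ * T :=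
      mul_nonneg (mul_nonneg (by linarith) hκ) hT0.le
    have d1 : 0 < A + 3 * n * κ * T := by linarith
    have d2 : 0 < T * A + 3 * ((n:ℝ) - 1) * κ * T := by nlinarith
    rw [ge_iff_le, div_le_div_iff₀ d2 d1]
    nlinarith [mul_nonneg (mul_nonneg (mul_nonneg hpos.le (by linarith : (0:ℝ) ≤ A - 3*κ)) (by linarith : (0:ℝ) ≤ T)) (by nlinarith : (0:ℝ) ≤ (n:ℝ)*(T-1)+1)]
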